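/- arXiv:1907.12197 — 5 statements merged into one kernel-verified Lean document; each statement's English description precedes it below -/
import Mathlib

section
/- Let n ≥ 3 and δ ∈ (0, 1). Then lim_{λ→1⁺} ∫₀^δ (λ − cos ρ)^(−n) (nλ − cos ρ) ρ^n sin ρ dρ = +∞. -/
open MeasureTheory Real Filter

set_option maxHeartbeats 1000000 in
/-- For n ≥ 3 and δ ∈ (0,1), ∫₀^δ (λ − cos ρ)^(−n)(nλ − cos ρ)ρ^n sin ρ dρ → +∞ as λ → 1⁺. -/
theorem stmt_2 (n : ℕ) (hn : 3 ≤ n) (δ : ℝ) (hδ0 : 0 < δ) (hδ1 : δ < 1) :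
    Tendsto (fun lam : ℝ =>
        ∫ ρ in (0:ℝ)..δ,
          ((lam - Real.cos ρ) ^ n)⁻¹ * ((n : ℝ) * lam - Real.cos ρ) * ρ ^ n * Real.sin ρ)
      (nhdsWithin 1 (Set.Ioi 1)) atTop := by
  have hπ : (0:ℝ) < π := Real.pi_pos
  have hπ3 : (3:ℝ) ≤ π := by linarith [Real.pi_gt_three]
  have hn3 : (3:ℝ) ≤ (n:ℝ) := by exact_mod_cast hn
  set C : ℝ := ((n:ℝ) - 1) * (2 / π) * ((8:ℝ) ^ n)⁻¹ with hCdef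
  have hCpos : 0 < C := by
    apply mul_pos (mul_pos (by linarith) (by positivity)) (by positivity)
  -- The lower bound function
  set G : ℝ → ℝ := fun lam => C * (Real.sqrt (lam - 1))⁻¹ with hGdef
  have hG : Tendsto G (nhdsWithin 1 (Set.Ioi 1)) atTop := by
    apply Tendsto.const_mul_atTop hCpos
    apply tendsto_inv_nhdsGT_zero.comp
    rw [tendsto_nhdsWithin_iff]
    constructor
    · have h1 : Tendsto (fun lam : ℝ => Real.sqrt (lam - 1)) (nhdsWithin 1 (Set.Ioi 1)) (nhds (Real.sqrt (1 - 1))) := by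
        apply Tendsto.mono_left _ nhdsWithin_le_nhds
        exact (Real.continuous_sqrt.comp (continuous_id.sub continuous_const)).tendsto 1
      simpa using h1
    · filter_upwards [self_mem_nhdsWithin] with lam (hlam : 1 < lam)
      exact Set.mem_Ioi.2 (Real.sqrt_pos.2 (by linarith))
  apply tendsto_atTop_mono' _ _ hG
  have hmem : Set.Ioo (1:ℝ) (1 + δ^2/4) ∈ nhdsWithin 1 (Set.Ioi 1) :=
    Ioo_mem_nhdsGT_of_mem ⟨le_refl 1, by nlinarith⟩
  filter_upwards [hmem] with lam hlam
  obtain ⟨hlam1, hlam2⟩ := hlam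
  set a : ℝ := Real.sqrt (lam - 1) with hadef
  have ha0 : 0 < a := Real.sqrt_pos.2 (by linarith)
  have ha2 : a ^ 2 = lam - 1 := Real.sq_sqrt (by linarith)
  have ha1 : a < 1 := by
    nlinarith [ha2, hδ1, hδ0]
  have haδ : 2 * a ≤ δ := by
    have : a < δ / 2 := by
      rw [hadef]
      rw [show δ / 2 = Real.sqrt ((δ/2)^2) from (Real.sqrt_sq (by positivity)).symm]
      apply Real.sqrt_lt_sqrt (by linarith)
      nlinarith
    linarith
  set f : ℝ → ℝ := fun ρ =>
      ((lam - Real.cos ρ) ^ n)⁻¹ * ((n : ℝ) * lam - Real.cos ρ) * ρ ^ n * Real.sin ρ with hfdef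
  have hden : ∀ ρ : ℝ, (0:ℝ) < lam - Real.cos ρ := fun ρ => by
    have := Real.cos_le_one ρ; linarith
  have hcont : Continuous f := by
    apply Continuous.mul
    apply Continuous.mul
    apply Continuous.mul
    · exact ((continuous_const.sub Real.continuous_cos).pow n).inv₀
        (fun ρ => pow_ne_zero _ (hden ρ).ne')
    · exact (continuous_const.sub Real.continuous_cos)
    · exact continuous_pow n
    · exact Real.continuous_sin
  have hint : ∀ u v : ℝ, IntervalIntegrable f volume u v := fun u v =>
    hcont.intervalIntegrable u v
  have hfnonneg : ∀ ρ ∈ Set.Icc (0:ℝ) δ, 0 ≤ f ρ := by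
    intro ρ hρ
    obtain ⟨h1, h2⟩ := hρ
    have hsin : 0 ≤ Real.sin ρ := Real.sin_nonneg_of_nonneg_of_le_pi h1 (by linarith)
    have hB : 0 ≤ (n:ℝ) * lam - Real.cos ρ := by
      nlinarith [Real.cos_le_one ρ]
    have hA : 0 ≤ ((lam - Real.cos ρ) ^ n)⁻¹ := inv_nonneg.2 (pow_nonneg (hden ρ).le n)
    exact mul_nonneg (mul_nonneg (mul_nonneg hA hB) (pow_nonneg h1 n)) hsin
  -- the constant lower bound on [a, 2a]
  set c : ℝ := ((8 * a ^ 2) ^ n)⁻¹ * ((n:ℝ) - 1) * a ^ n * (2 / π * a) with hcdef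
  have hmid : ∀ ρ ∈ Set.Icc a (2*a), c ≤ f ρ := by
    intro ρ hρ
    obtain ⟨h1, h2⟩ := hρ
    have hρ0 : 0 < ρ := lt_of_lt_of_le ha0 h1
    have hρδ : ρ ≤ δ := le_trans h2 haδ
    have hdρ := hden ρ
    have hA : lam - Real.cos ρ ≤ 8 * a ^ 2 := by
      have hcos := Real.one_sub_sq_div_two_le_cos (x := ρ)
      nlinarith [mul_nonneg (by linarith : (0:ℝ) ≤ 2*a - ρ) (by linarith : (0:ℝ) ≤ 2*a + ρ),
        sq_nonneg a]
    have hAinv : ((8 * a ^ 2) ^ n)⁻¹ ≤ ((lam - Real.cos ρ) ^ n)⁻¹ := by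
      apply inv_anti₀ (pow_pos hdρ n)
      exact pow_le_pow_left₀ hdρ.le hA n
    have hB : (n:ℝ) - 1 ≤ (n:ℝ) * lam - Real.cos ρ := by
      nlinarith [Real.cos_le_one ρ,
        mul_nonneg (by linarith : (0:ℝ) ≤ (n:ℝ)) (by linarith : (0:ℝ) ≤ lam - 1)]
    have hpowρ : a ^ n ≤ ρ ^ n := pow_le_pow_left₀ ha0.le h1 n
    have hsin : 2 / π * a ≤ Real.sin ρ := by
      have hs := Real.mul_le_sin hρ0.le (by linarith : ρ ≤ π / 2)
      have h2' : 2 / π * a ≤ 2 / π * ρ := mul_le_mul_of_nonneg_left h1 (by positivity)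
      linarith
    have hI2 : (0:ℝ) ≤ ((lam - Real.cos ρ) ^ n)⁻¹ := inv_nonneg.2 (pow_nonneg hdρ.le n)
    have hBn : (0:ℝ) ≤ (n:ℝ) * lam - Real.cos ρ := by linarith
    show ((8 * a ^ 2) ^ n)⁻¹ * ((n:ℝ) - 1) * a ^ n * (2 / π * a) ≤
      ((lam - Real.cos ρ) ^ n)⁻¹ * ((n : ℝ) * lam - Real.cos ρ) * ρ ^ n * Real.sin ρ
    apply mul_le_mul _ hsin (by positivity) _
    · apply mul_le_mul _ hpowρ (pow_nonneg ha0.le n) _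
      · exact mul_le_mul hAinv hB (by linarith) hI2
      · exact mul_nonneg hI2 hBn
    · exact mul_nonneg (mul_nonneg hI2 hBn) (pow_nonneg hρ0.le n)
  have hc0 : 0 ≤ c := by
    rw [hcdef]
    apply mul_nonneg (mul_nonneg (mul_nonneg (by positivity) (by linarith)) (by positivity))
      (by positivity)
  -- integral over [a, 2a] is at least a * c
  have key1 : a * c ≤ ∫ ρ in a..(2*a), f ρ := by
    have h := intervalIntegral.integral_mono_on (by linarith : a ≤ 2*a)
      (intervalIntegrable_const (c := c)) (hint a (2*a)) hmid
    rwa [intervalIntegral.integral_const, smul_eq_mul, show 2*a - a = a by ring] at h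
  have split1 : (∫ ρ in (0:ℝ)..a, f ρ) + (∫ ρ in a..(2*a), f ρ) = ∫ ρ in (0:ℝ)..(2*a), f ρ :=
    intervalIntegral.integral_add_adjacent_intervals (hint 0 a) (hint a (2*a))
  have split2 : (∫ ρ in (0:ℝ)..(2*a), f ρ) + (∫ ρ in (2*a)..δ, f ρ) = ∫ ρ in (0:ℝ)..δ, f ρ :=
    intervalIntegral.integral_add_adjacent_intervals (hint 0 (2*a)) (hint (2*a) δ)
  have h01 : 0 ≤ ∫ ρ in (0:ℝ)..a, f ρ := by
    apply intervalIntegral.integral_nonneg ha0.le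
    intro ρ hρ
    exact hfnonneg ρ ⟨hρ.1, le_trans hρ.2 (by linarith)⟩
  have h02 : 0 ≤ ∫ ρ in (2*a)..δ, f ρ := by
    apply intervalIntegral.integral_nonneg haδ
    intro ρ hρ
    exact hfnonneg ρ ⟨le_trans (by linarith) hρ.1, hρ.2⟩
  have hbig : a * c ≤ ∫ ρ in (0:ℝ)..δ, f ρ := by linarith
  -- finally : G lam ≤ a * c
  have hGle : G lam ≤ a * c := by
    have hp : a ^ n ≤ a ^ 3 := pow_le_pow_of_le_one ha0.le ha1.le hn
    have e1 : a * c = C * (a ^ 2 / a ^ n) := by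
      rw [hcdef, hCdef, show (8 * a ^ 2) ^ n = 8 ^ n * (a ^ n) ^ 2 by
        rw [mul_pow, ← pow_mul, ← pow_mul, Nat.mul_comm]]
      field_simp
    have e2 : a⁻¹ ≤ a ^ 2 / a ^ n := by
      rw [le_div_iff₀ (pow_pos ha0 n)]
      calc a⁻¹ * a ^ n ≤ a⁻¹ * a ^ 3 := by gcongr <;> positivity
        _ = a ^ 2 := by field_simp
    show C * a⁻¹ ≤ a * c
    rw [e1]
    exact mul_le_mul_of_nonneg_left e2 hCpos.le
  calc G lam ≤ a * c := hGle
    _ ≤ _ := hbig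
end

section
/- Let n ≥ 3 and for λ > 1 define s(λ) = ∫_{𝕊ⁿ} (λ − cos d₀)^(2−n) dv, where d₀ is the distance to a fixed point on the unit sphere 𝕊ⁿ. Then s satisfies the ODE [s''(λ)/((n−2)(n−1))]^((n−2)/n) = (2/n)ω_n^(−2/n)·[((1−λ²)/(2(n−1)))s''(λ) − λ s'(λ) + s(λ)] for all λ > 1, where ω_n = Vol(𝕊ⁿ). -/
open MeasureTheory Real

/-- s(λ) = ∫_{𝕊ⁿ}(λ − cos d₀)^(2−n) dv, computed in polar coordinates about the
basepoint: Vol(𝕊^{n−1})·∫₀^π (λ − cos ρ)^(2−n) sin^{n−1}ρ dρ, with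
Vol(𝕊^{n−1}) = n·ω̃_n. -/
noncomputable def sFun (n : ℕ) (lam : ℝ) : ℝ :=
  ((n : ℝ) * (volume (Metric.ball (0 : EuclideanSpace ℝ (Fin n)) 1)).toReal) *
    ∫ ρ in (0:ℝ)..Real.pi, ((lam - Real.cos ρ) ^ (n - 2))⁻¹ * Real.sin ρ ^ (n - 1)

/-- ω_n = Vol(𝕊ⁿ, g₀). -/
noncomputable def sphereVol (n : ℕ) : ℝ :=
  ((n : ℝ) * (volume (Metric.ball (0 : EuclideanSpace ℝ (Fin n)) 1)).toReal) *
    ∫ t in (0:ℝ)..Real.pi, Real.sin t ^ (n - 1)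

/-! Put `I_k(λ) = ∫₀^π (λ - cos ρ)^(-k) sin^(n-1) ρ dρ`, so that `s = |𝕊ⁿ⁻¹| I_{n-2}` and,
differentiating under the integral sign, `s' = -(n-2) |𝕊ⁿ⁻¹| I_{n-1}` and
`s'' = (n-2)(n-1) |𝕊ⁿ⁻¹| I_n`. Two identities then close the ODE. Integrating the derivative of
`sin^n ρ (λ - cos ρ)^(1-n)` over `[0, π]` gives the recurrence
`I_{n-2} + (n-2) λ I_{n-1} = (n-1)(λ² - 1) I_n`, which turns the bracket on the right into
`(n/2)(λ² - 1) |𝕊ⁿ⁻¹| I_n`. The substitution `cos φ = (λ cos ρ - 1)/(λ - cos ρ)`, the polar form of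
a conformal dilation of `𝕊ⁿ`, has `dφ/dρ = √(λ² - 1)/(λ - cos ρ)` and gives
`(λ² - 1)^(n/2) I_n = ∫₀^π sin^(n-1) φ dφ`, i.e. `|𝕊ⁿ⁻¹| I_n = ω_n (λ² - 1)^(-n/2)`. Both sides of
the ODE are then `ω_n^((n-2)/n) (λ² - 1)^(1-n/2)`. -/

open Set Filter Topology

noncomputable def sphereArea (n : ℕ) : ℝ :=
  (n : ℝ) * (volume (Metric.ball (0 : EuclideanSpace ℝ (Fin n)) 1)).toReal

noncomputable def zonalIntegrand (p k : ℕ) (lam ρ : ℝ) : ℝ :=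
  ((lam - cos ρ) ^ k)⁻¹ * sin ρ ^ p

noncomputable def zonalIntegral (p k : ℕ) (lam : ℝ) : ℝ :=
  ∫ ρ in (0 : ℝ)..π, zonalIntegrand p k lam ρ

lemma sphereArea_pos {n : ℕ} (hn : n ≠ 0) : 0 < sphereArea n :=
  mul_pos (by positivity) (ENNReal.toReal_pos (Metric.measure_ball_pos _ _ one_pos).ne'
    measure_ball_lt_top.ne)

lemma sub_cos_pos {lam : ℝ} (hlam : 1 < lam) (ρ : ℝ) : 0 < lam - cos ρ := by
  linarith [cos_le_one ρ]

section zonal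

variable (p k : ℕ) {lam : ℝ}

lemma continuous_zonalIntegrand (hlam : 1 < lam) : Continuous (zonalIntegrand p k lam) :=
  (((continuous_const.sub continuous_cos).pow k).inv₀
    fun ρ => pow_ne_zero _ (sub_cos_pos hlam ρ).ne').mul (continuous_sin.pow p)

lemma abs_zonalIntegrand_le {c : ℝ} (hc : 1 < c) (hlam : c ≤ lam) (ρ : ℝ) :
    |zonalIntegrand p k lam ρ| ≤ ((c - 1) ^ k)⁻¹ := by
  have hc1 : 0 < c - 1 := by linarith
  rw [zonalIntegrand, abs_mul, abs_inv, abs_pow, abs_pow,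
    abs_of_pos (sub_cos_pos (hc.trans_le hlam) ρ)]
  calc ((lam - cos ρ) ^ k)⁻¹ * |sin ρ| ^ p ≤ ((c - 1) ^ k)⁻¹ * 1 := by
        gcongr
        · linarith [cos_le_one ρ]
        · exact pow_le_one₀ (abs_nonneg _) (abs_sin_le_one ρ)
    _ = ((c - 1) ^ k)⁻¹ := mul_one _

lemma hasDerivAt_zonalIntegrand (hlam : 1 < lam) (ρ : ℝ) :
    HasDerivAt (fun x => zonalIntegrand p k x ρ) (-k * zonalIntegrand p (k + 1) lam ρ) lam := by
  have hd := (sub_cos_pos hlam ρ).ne'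
  have h : HasDerivAt (fun x => ((x - cos ρ) ^ k)⁻¹ * sin ρ ^ p)
      (-(k * (lam - cos ρ) ^ (k - 1) * 1) / ((lam - cos ρ) ^ k) ^ 2 * sin ρ ^ p) lam :=
    ((((hasDerivAt_id' lam).sub_const (cos ρ)).fun_pow k).inv (pow_ne_zero k hd)).mul_const _
  refine h.congr_deriv ?_
  rcases k with _ | k
  · simp
  · simp only [zonalIntegrand, Nat.add_sub_cancel]
    field_simp
    ring

lemma hasDerivAt_zonalIntegral (hlam : 1 < lam) :
    HasDerivAt (zonalIntegral p k) (-k * zonalIntegral p (k + 1) lam) lam := by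
  obtain ⟨c, hc, hclam⟩ := exists_between hlam
  have key := intervalIntegral.hasDerivAt_integral_of_dominated_loc_of_deriv_le
    (μ := volume) (a := 0) (b := π) (F := zonalIntegrand p k)
    (F' := fun x ρ => -k * zonalIntegrand p (k + 1) x ρ)
    (bound := fun _ => k * ((c - 1) ^ (k + 1))⁻¹) (Ioi_mem_nhds hclam)
    (by
      filter_upwards [Ioi_mem_nhds hlam] with x hx
      exact (continuous_zonalIntegrand p k hx).aestronglyMeasurable)
    ((continuous_zonalIntegrand p k hlam).intervalIntegrable 0 π)
    ((continuous_zonalIntegrand p (k + 1) hlam).const_mul _).aestronglyMeasurable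
    (ae_of_all _ fun ρ _ x hx => by
      rw [norm_mul, norm_neg, Real.norm_natCast, Real.norm_eq_abs]
      exact mul_le_mul_of_nonneg_left (abs_zonalIntegrand_le p (k + 1) hc (le_of_lt hx) ρ)
        k.cast_nonneg)
    intervalIntegrable_const
    (ae_of_all _ fun ρ _ x hx => hasDerivAt_zonalIntegrand p k (hc.trans hx) ρ)
  rw [intervalIntegral.integral_const_mul] at key
  exact key.2

lemma deriv_zonalIntegral (hlam : 1 < lam) :
    deriv (zonalIntegral p k) lam = -k * zonalIntegral p (k + 1) lam :=
  (hasDerivAt_zonalIntegral p k hlam).deriv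

lemma deriv_deriv_zonalIntegral (hlam : 1 < lam) :
    deriv (deriv (zonalIntegral p k)) lam = k * (k + 1) * zonalIntegral p (k + 2) lam := by
  have h : deriv (zonalIntegral p k) =ᶠ[𝓝 lam] fun x => -k * zonalIntegral p (k + 1) x :=
    eventually_of_mem (Ioi_mem_nhds hlam) fun x hx => deriv_zonalIntegral p k hx
  rw [h.deriv_eq, ((hasDerivAt_zonalIntegral p (k + 1) hlam).const_mul _).deriv]
  push_cast
  ring

end zonal

section recurrence

variable (p j : ℕ) {lam : ℝ}

lemma hasDerivAt_zonalIntegrand_succ_succ (hlam : 1 < lam) (ρ : ℝ) :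
    HasDerivAt (zonalIntegrand (p + 1) (j + 1) lam)
      ((j - p) * zonalIntegrand p j lam ρ
        + (p - 1 - 2 * j) * lam * zonalIntegrand p (j + 1) lam ρ
        + (j + 1) * (lam ^ 2 - 1) * zonalIntegrand p (j + 2) lam ρ) ρ := by
  have hd := (sub_cos_pos hlam ρ).ne'
  have hc : HasDerivAt (fun ρ => lam - cos ρ) (sin ρ) ρ := by
    simpa using (hasDerivAt_cos ρ).const_sub lam
  have h : HasDerivAt (fun ρ => ((lam - cos ρ) ^ (j + 1))⁻¹ * sin ρ ^ (p + 1))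
      (-((j + 1 : ℕ) * (lam - cos ρ) ^ j * sin ρ) / ((lam - cos ρ) ^ (j + 1)) ^ 2
          * sin ρ ^ (p + 1)
        + ((lam - cos ρ) ^ (j + 1))⁻¹ * ((p + 1 : ℕ) * sin ρ ^ p * cos ρ)) ρ :=
    ((hc.fun_pow (j + 1)).inv (pow_ne_zero _ hd)).mul ((hasDerivAt_sin ρ).fun_pow (p + 1))
  refine h.congr_deriv ?_
  simp only [zonalIntegrand]
  field_simp
  push_cast
  linear_combination -((j + 1) * sin ρ ^ p * (lam - cos ρ) ^ (3 * j + 2)) * sin_sq_add_cos_sq ρ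

theorem zonalIntegral_recurrence (hlam : 1 < lam) :
    (j - p) * zonalIntegral p j lam + (p - 1 - 2 * j) * lam * zonalIntegral p (j + 1) lam
      + (j + 1) * (lam ^ 2 - 1) * zonalIntegral p (j + 2) lam = 0 := by
  have hint k : IntervalIntegrable (zonalIntegrand p k lam) volume 0 π :=
    (continuous_zonalIntegrand p k hlam).intervalIntegrable 0 π
  have h := intervalIntegral.integral_eq_sub_of_hasDerivAt
    (fun ρ _ => hasDerivAt_zonalIntegrand_succ_succ p j hlam ρ)
    ((((hint j).const_mul _).add ((hint _).const_mul _)).add ((hint _).const_mul _))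
  rw [intervalIntegral.integral_add (((hint j).const_mul _).add ((hint _).const_mul _))
      ((hint _).const_mul _), intervalIntegral.integral_add ((hint j).const_mul _)
      ((hint _).const_mul _), intervalIntegral.integral_const_mul,
    intervalIntegral.integral_const_mul, intervalIntegral.integral_const_mul] at h
  have hboundary :
      zonalIntegrand (p + 1) (j + 1) lam π - zonalIntegrand (p + 1) (j + 1) lam 0 = 0 := by
    simp [zonalIntegrand]
  rwa [hboundary] at h

end recurrence

noncomputable def conformalAngle (lam ρ : ℝ) : ℝ :=
  arccos ((lam * cos ρ - 1) / (lam - cos ρ))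

section conformalAngle

variable {lam : ℝ}

lemma continuous_conformalAngle (hlam : 1 < lam) : Continuous (conformalAngle lam) :=
  continuous_arccos.comp <| ((continuous_const.mul continuous_cos).sub continuous_const).div
    (continuous_const.sub continuous_cos) fun ρ => (sub_cos_pos hlam ρ).ne'

lemma conformalAngle_zero (hlam : 1 < lam) : conformalAngle lam 0 = 0 := by
  rw [conformalAngle, cos_zero, mul_one, div_self (sub_ne_zero.2 hlam.ne'), arccos_one]

lemma conformalAngle_pi (hlam : 1 < lam) : conformalAngle lam π = π := by
  have h : lam - -1 ≠ 0 := by linarith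
  rw [conformalAngle, cos_pi, show (lam * -1 - 1) / (lam - -1) = -1 by field_simp; ring,
    arccos_neg_one]

lemma one_sub_sq_div_sub_cos (hlam : 1 < lam) (ρ : ℝ) :
    1 - ((lam * cos ρ - 1) / (lam - cos ρ)) ^ 2
      = (√(lam ^ 2 - 1) * sin ρ / (lam - cos ρ)) ^ 2 := by
  have hd := (sub_cos_pos hlam ρ).ne'
  rw [div_pow, div_pow, mul_pow, sq_sqrt (by nlinarith), sin_sq]
  field_simp
  ring

lemma sin_conformalAngle (hlam : 1 < lam) {ρ : ℝ} (hρ : ρ ∈ Icc 0 π) :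
    sin (conformalAngle lam ρ) = √(lam ^ 2 - 1) * sin ρ / (lam - cos ρ) := by
  rw [conformalAngle, sin_arccos, one_sub_sq_div_sub_cos hlam, sqrt_sq]
  exact div_nonneg (mul_nonneg (sqrt_nonneg _) (sin_nonneg_of_nonneg_of_le_pi hρ.1 hρ.2))
    (sub_cos_pos hlam ρ).le

lemma hasDerivAt_conformalAngle (hlam : 1 < lam) {ρ : ℝ} (hρ : ρ ∈ Ioo 0 π) :
    HasDerivAt (conformalAngle lam) (√(lam ^ 2 - 1) / (lam - cos ρ)) ρ := by
  have hd := sub_cos_pos hlam ρ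
  have hq : 0 < √(lam ^ 2 - 1) := sqrt_pos.2 (by nlinarith)
  have hs := sin_pos_of_pos_of_lt_pi hρ.1 hρ.2
  have hψ : HasDerivAt (fun ρ => (lam * cos ρ - 1) / (lam - cos ρ))
      ((lam * -sin ρ * (lam - cos ρ) - (lam * cos ρ - 1) * sin ρ) / (lam - cos ρ) ^ 2) ρ := by
    refine (((hasDerivAt_cos ρ).const_mul lam).sub_const 1).div ?_ hd.ne'
    simpa using (hasDerivAt_cos ρ).const_sub lam
  have hpos : 0 < 1 - ((lam * cos ρ - 1) / (lam - cos ρ)) ^ 2 := by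
    rw [one_sub_sq_div_sub_cos hlam]
    positivity
  have h := (hasDerivAt_arccos (by nlinarith) (by nlinarith)).comp ρ hψ
  rw [one_sub_sq_div_sub_cos hlam, sqrt_sq (by positivity)] at h
  refine h.congr_deriv ?_
  field_simp
  rw [sq_sqrt (by nlinarith)]
  ring

end conformalAngle

theorem sqrt_pow_mul_zonalIntegral {lam : ℝ} (p : ℕ) (hlam : 1 < lam) :
    √(lam ^ 2 - 1) ^ (p + 1) * zonalIntegral p (p + 1) lam
      = ∫ t in (0 : ℝ)..π, sin t ^ p := by
  have hq : 0 < √(lam ^ 2 - 1) := sqrt_pos.2 (by nlinarith)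
  have hsubst := intervalIntegral.integral_comp_mul_deriv_of_deriv_nonneg (a := 0) (b := π)
    (g := fun t => sin t ^ p) (continuous_conformalAngle hlam).continuousOn
    (fun ρ hρ => hasDerivAt_conformalAngle hlam (by simpa [pi_pos.le] using hρ))
    (fun ρ _ => (div_pos hq (sub_cos_pos hlam ρ)).le)
  rw [conformalAngle_zero hlam, conformalAngle_pi hlam] at hsubst
  rw [← hsubst, zonalIntegral, ← intervalIntegral.integral_const_mul]
  refine intervalIntegral.integral_congr fun ρ hρ => ?_
  rw [uIcc_of_le pi_pos.le] at hρ
  have hd := (sub_cos_pos hlam ρ).ne'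
  simp only [Function.comp, zonalIntegrand, sin_conformalAngle hlam hρ, div_pow, mul_pow]
  field_simp
  ring

lemma rpow_sub_two_div_of_mul_pow_eq {X q ω : ℝ} {n : ℕ} (hX : 0 < X) (hq : 0 < q)
    (hn : n ≠ 0) (h : X * q ^ n = ω) :
    X ^ (((n : ℝ) - 2) / n) = ω ^ (-(2 : ℝ) / n) * X * q ^ 2 := by
  have hn' : (n : ℝ) ≠ 0 := Nat.cast_ne_zero.2 hn
  rw [← h, mul_rpow hX.le (by positivity), ← rpow_natCast q n, ← rpow_mul hq.le,
    show (n : ℝ) * (-2 / n) = -2 by field_simp,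
    show ((n : ℝ) - 2) / n = 1 + -2 / n by field_simp; ring,
    rpow_add hX, rpow_one, rpow_neg hq.le, ← rpow_natCast q 2]
  push_cast
  field_simp

section sFun

variable (m : ℕ) {lam : ℝ}

lemma sFun_add_three :
    sFun (m + 3) = fun lam => sphereArea (m + 3) * zonalIntegral (m + 2) (m + 1) lam := rfl

lemma sphereVol_add_three :
    sphereVol (m + 3) = sphereArea (m + 3) * ∫ t in (0 : ℝ)..π, sin t ^ (m + 2) := rfl

lemma sphereVol_add_three_pos : 0 < sphereVol (m + 3) :=
  mul_pos (sphereArea_pos (by omega)) (integral_sin_pow_pos _)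

lemma deriv_sFun_add_three (hlam : 1 < lam) : deriv (sFun (m + 3)) lam =
    sphereArea (m + 3) * (-(m + 1) * zonalIntegral (m + 2) (m + 2) lam) := by
  simp only [sFun_add_three, deriv_const_mul_field', deriv_zonalIntegral _ _ hlam]
  push_cast
  ring

lemma deriv_deriv_sFun_add_three (hlam : 1 < lam) : deriv (deriv (sFun (m + 3))) lam =
    sphereArea (m + 3) * ((m + 1) * (m + 2) * zonalIntegral (m + 2) (m + 3) lam) := by
  simp only [sFun_add_three, deriv_const_mul_field', deriv_deriv_zonalIntegral _ _ hlam]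
  push_cast
  ring

lemma sphereArea_mul_zonalIntegral_mul_sqrt_pow (hlam : 1 < lam) :
    sphereArea (m + 3) * zonalIntegral (m + 2) (m + 3) lam * √(lam ^ 2 - 1) ^ (m + 3)
      = sphereVol (m + 3) := by
  rw [sphereVol_add_three, ← sqrt_pow_mul_zonalIntegral (m + 2) hlam]
  ring

lemma sFun_combination_eq (hlam : 1 < lam) :
    (1 - lam ^ 2) / (2 * (m + 2)) * deriv (deriv (sFun (m + 3))) lam
      - lam * deriv (sFun (m + 3)) lam + sFun (m + 3) lam
      = (m + 3) / 2 * (sphereArea (m + 3) * zonalIntegral (m + 2) (m + 3) lam)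
          * (lam ^ 2 - 1) := by
  have hrec := zonalIntegral_recurrence (m + 2) (m + 1) hlam
  simp only [add_assoc, Nat.reduceAdd] at hrec
  push_cast at hrec
  have hm2 : (m : ℝ) + 2 ≠ 0 := by positivity
  rw [deriv_deriv_sFun_add_three m hlam, deriv_sFun_add_three m hlam, sFun_add_three]
  field_simp
  linear_combination -2 * sphereArea (m + 3) * hrec

end sFun

/-- The spherical integral s(λ) satisfies, for every λ > 1, the ODE
[s''(λ)/((n−2)(n−1))]^((n−2)/n)
  = (2/n)·ω_n^(−2/n)·[((1−λ²)/(2(n−1)))s''(λ) − λs'(λ) + s(λ)],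
expressing that u_λ = (λ − cos d₀)^(1−n/2) is extremal for the sharp Sobolev
inequality on 𝕊ⁿ. -/
theorem stmt_8 (n : ℕ) (hn : 3 ≤ n) :
    ∀ lam : ℝ, 1 < lam →
      (deriv (deriv (sFun n)) lam / (((n : ℝ) - 2) * ((n : ℝ) - 1))) ^ (((n : ℝ) - 2) / n) =
        (2 / (n : ℝ)) * sphereVol n ^ (-(2 : ℝ) / n) *
          ((1 - lam ^ 2) / (2 * ((n : ℝ) - 1)) * deriv (deriv (sFun n)) lam -
            lam * deriv (sFun n) lam + sFun n lam) := by
  intro lam hlam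
  obtain ⟨m, rfl⟩ : ∃ m, n = m + 3 := ⟨n - 3, by omega⟩
  have hq : 0 < √(lam ^ 2 - 1) := sqrt_pos.2 (by nlinarith)
  have hvol := sphereArea_mul_zonalIntegral_mul_sqrt_pow m hlam
  have hX : 0 < sphereArea (m + 3) * zonalIntegral (m + 2) (m + 3) lam :=
    (mul_pos_iff_of_pos_right (pow_pos hq _)).1 (hvol ▸ sphereVol_add_three_pos m)
  have hn1 : ((m + 3 : ℕ) : ℝ) - 1 = m + 2 := by push_cast; ring
  have hbase :
      deriv (deriv (sFun (m + 3))) lam / ((((m + 3 : ℕ) : ℝ) - 2) * (((m + 3 : ℕ) : ℝ) - 1))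
      = sphereArea (m + 3) * zonalIntegral (m + 2) (m + 3) lam := by
    have hm1 : (m : ℝ) + 1 ≠ 0 := by positivity
    have hm2 : (m : ℝ) + 2 ≠ 0 := by positivity
    rw [deriv_deriv_sFun_add_three m hlam, hn1,
      show ((m + 3 : ℕ) : ℝ) - 2 = m + 1 by push_cast; ring]
    field_simp
  rw [hbase, rpow_sub_two_div_of_mul_pow_eq hX hq (by omega) hvol, hn1, sFun_combination_eq m hlam,
    sq_sqrt (by nlinarith)]
  push_cast
  field_simp
end

section
/- Let n ≥ 3 and C > 0. Suppose I, H : (1,∞) → (0,∞) are differentiable with I' < 0, H' < 0, satisfying the differential inequality [−I'(λ)/(λ(n−2)(n−1))]^((n−2)/n) ≤ C[((λ²−1)/(2λ(n−1)))I'(λ) + I(λ)] and the differential equation [−H'(λ)/(λ(n−2)(n−1))]^((n−2)/n) = C[((λ²−1)/(2λ(n−1)))H'(λ) + H(λ)] for all λ > 1. If liminf_{λ→1⁺} I(λ)/H(λ) > 1, then I(λ) ≥ H(λ) for all λ > 1. -/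
/-!
Write `d = λ(n-2)(n-1)` and `φ_λ(t) = t^((n-2)/n) + ((n-2)/2) C (λ²-1) t`. The differential
inequality and equation read `φ_λ(-I'/d) ≤ C I` and `φ_λ(-H'/d) = C H`. Since `φ_λ` is strictly
increasing on `[0, ∞)`, at any point where `I ≤ H` we get `-I' ≤ -H'`, i.e. `H' ≤ I'`: the graph of
`H` can touch that of `I` from below but never cross it. By the liminf hypothesis `H < I` just to
the right of `1`, so `H ≤ I` everywhere.
-/

open Real Filter Set Topology

lemma strictMonoOn_rpow_add_mul {p a : ℝ} (hp : 0 < p) (ha : 0 ≤ a) :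
    StrictMonoOn (fun t : ℝ => t ^ p + a * t) (Ici 0) :=
  fun _ hx _ hy hxy =>
    add_lt_add_of_lt_of_le (strictMonoOn_rpow_Ici_of_exponent_pos hp hx hy hxy)
      (mul_le_mul_of_nonneg_left hxy.le ha)

lemma mul_slope_add_eq {n C lam y J : ℝ} (hlam : 0 < lam) (hn : 2 < n) :
    C * ((lam ^ 2 - 1) / (2 * lam * (n - 1)) * y + J) =
      C * J - (n - 2) / 2 * C * (lam ^ 2 - 1) * (-y / (lam * (n - 2) * (n - 1))) := by
  have : n - 2 ≠ 0 := by linarith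
  have : n - 1 ≠ 0 := by linarith
  field_simp
  ring

lemma slope_le_of_le_of_odi_of_ode {n C lam i h i' h' : ℝ} (hn : 2 < n) (hC : 0 < C)
    (hlam : 1 < lam) (hi' : i' < 0) (hh' : h' < 0)
    (hodi : (-i' / (lam * (n - 2) * (n - 1))) ^ ((n - 2) / n) ≤
      C * ((lam ^ 2 - 1) / (2 * lam * (n - 1)) * i' + i))
    (hode : (-h' / (lam * (n - 2) * (n - 1))) ^ ((n - 2) / n) =
      C * ((lam ^ 2 - 1) / (2 * lam * (n - 1)) * h' + h))
    (hih : i ≤ h) : h' ≤ i' := by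
  have hd : 0 < lam * (n - 2) * (n - 1) := by
    have : 0 < lam := by linarith
    have : 0 < n - 2 := by linarith
    have : 0 < n - 1 := by linarith
    positivity
  have hφ : StrictMonoOn (fun t : ℝ => t ^ ((n - 2) / n) + (n - 2) / 2 * C * (lam ^ 2 - 1) * t)
      (Ici 0) := by
    refine strictMonoOn_rpow_add_mul (div_pos (by linarith) (by linarith)) ?_
    have : 0 ≤ lam ^ 2 - 1 := by nlinarith
    have : 0 ≤ n - 2 := by linarith
    positivity
  have hxi : 0 ≤ -i' / (lam * (n - 2) * (n - 1)) := div_nonneg (by linarith) hd.le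
  have hxh : 0 ≤ -h' / (lam * (n - 2) * (n - 1)) := div_nonneg (by linarith) hd.le
  rw [mul_slope_add_eq (by linarith) hn] at hodi hode
  have hx : -i' / (lam * (n - 2) * (n - 1)) ≤ -h' / (lam * (n - 2) * (n - 1)) :=
    (hφ.le_iff_le hxi hxh).1 (by nlinarith [mul_le_mul_of_nonneg_left hih hC.le])
  linarith [(div_le_div_iff_of_pos_right hd).1 hx]

lemma image_le_of_deriv_le_deriv_of_le {f g f' g' : ℝ → ℝ} {a b : ℝ}
    (hf : ∀ x ∈ Icc a b, HasDerivAt f (f' x) x) (hg : ∀ x ∈ Icc a b, HasDerivAt g (g' x) x)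
    (ha : f a ≤ g a) (bound : ∀ x ∈ Ico a b, g x ≤ f x → f' x ≤ g' x) :
    ∀ ⦃x⦄, x ∈ Icc a b → f x ≤ g x := by
  -- Tilting `g` by `ε (x - a)` makes `bound` strict, as the fencing theorem requires.
  have htilt : ∀ ε > 0, ∀ x ∈ Icc a b, f x ≤ g x + ε * (x - a) := by
    intro ε hε
    refine image_le_of_deriv_right_lt_deriv_boundary' (f' := f') (B' := fun x => g' x + ε)
      (fun x hx => (hf x hx).continuousAt.continuousWithinAt)
      (fun x hx => (hf x (Ico_subset_Icc_self hx)).hasDerivWithinAt) (by simpa using ha)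
      (fun x hx => ((hg x hx).continuousAt.add (by fun_prop)).continuousWithinAt)
      (fun x hx => (((hg x (Ico_subset_Icc_self hx)).add
        (((hasDerivAt_id x).sub_const a).const_mul ε)).hasDerivWithinAt).congr_deriv (by simp))
      fun x hx hfx => ?_
    have : g x ≤ f x := by rw [hfx]; nlinarith [hx.1]
    linarith [bound x hx this]
  intro x hx
  have hlim : Tendsto (fun ε => g x + ε * (x - a)) (𝓝[>] 0) (𝓝 (g x)) :=
    ((show Continuous fun ε => g x + ε * (x - a) by fun_prop).tendsto' 0 (g x)
      (by simp)).mono_left nhdsWithin_le_nhds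
  exact ge_of_tendsto hlim (eventually_nhdsWithin_of_forall fun ε hε => htilt ε hε x hx)

lemma Filter.eventually_lt_of_one_lt_liminf_div {α : Type*} {l : Filter α} {f g : α → ℝ}
    (hf : ∀ᶠ x in l, 0 ≤ f x) (hg : ∀ᶠ x in l, 0 < g x)
    (h : 1 < liminf (fun x => f x / g x) l) : ∀ᶠ x in l, g x < f x := by
  have hbdd : IsBoundedUnder (· ≥ ·) l (fun x => f x / g x) :=
    ⟨0, eventually_map.2 (by filter_upwards [hf, hg] with x hfx hgx using div_nonneg hfx hgx.le)⟩
  filter_upwards [eventually_lt_of_lt_liminf h hbdd, hg] with x hx hgx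
  exact (one_lt_div hgx).1 hx

/-- ODE vs ODI comparison principle: if I satisfies the differential inequality,
H solves the corresponding ODE, both are positive and decreasing on (1,∞), and
liminf_{λ→1⁺} I(λ)/H(λ) > 1, then I ≥ H on (1,∞). -/
theorem stmt_10 (n : ℕ) (hn : 3 ≤ n) (C : ℝ) (hC : 0 < C)
    (I H I' H' : ℝ → ℝ)
    (hIpos : ∀ lam : ℝ, 1 < lam → 0 < I lam)
    (hHpos : ∀ lam : ℝ, 1 < lam → 0 < H lam)
    (hId : ∀ lam : ℝ, 1 < lam → HasDerivAt I (I' lam) lam)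
    (hI'neg : ∀ lam : ℝ, 1 < lam → I' lam < 0)
    (hHd : ∀ lam : ℝ, 1 < lam → HasDerivAt H (H' lam) lam)
    (hH'neg : ∀ lam : ℝ, 1 < lam → H' lam < 0)
    (hodi : ∀ lam : ℝ, 1 < lam →
      (-(I' lam) / (lam * ((n : ℝ) - 2) * ((n : ℝ) - 1))) ^ (((n : ℝ) - 2) / n) ≤
        C * ((lam ^ 2 - 1) / (2 * lam * ((n : ℝ) - 1)) * I' lam + I lam))
    (hode : ∀ lam : ℝ, 1 < lam →
      (-(H' lam) / (lam * ((n : ℝ) - 2) * ((n : ℝ) - 1))) ^ (((n : ℝ) - 2) / n) =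
        C * ((lam ^ 2 - 1) / (2 * lam * ((n : ℝ) - 1)) * H' lam + H lam))
    (hliminf : 1 < liminf (fun lam => I lam / H lam) (nhdsWithin 1 (Set.Ioi 1))) :
    ∀ lam : ℝ, 1 < lam → H lam ≤ I lam := by
  intro lam hlam
  have hn2 : (2 : ℝ) < n := by exact_mod_cast hn
  have hnear : ∀ᶠ x in 𝓝[>] 1, H x < I x :=
    eventually_lt_of_one_lt_liminf_div (eventually_nhdsWithin_of_forall fun x hx => (hIpos x hx).le)
      (eventually_nhdsWithin_of_forall hHpos) hliminf
  obtain ⟨c, hHIc, hc1, hclam⟩ := (hnear.and (Ioo_mem_nhdsGT hlam)).exists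
  have hsub : ∀ x ∈ Icc c lam, 1 < x := fun x hx => hc1.trans_le hx.1
  refine image_le_of_deriv_le_deriv_of_le (fun x hx => hHd x (hsub x hx))
    (fun x hx => hId x (hsub x hx)) hHIc.le (fun x hx hIH => ?_) ⟨hclam.le, le_rfl⟩
  have hx := hsub x (Ico_subset_Icc_self hx)
  exact slope_le_of_le_of_odi_of_ode hn2 hC hx (hI'neg x hx) (hH'neg x hx) (hodi x hx)
    (hode x hx) hIH
end

section
/- Let n ≥ 3 and suppose that for all λ > 1, (n−2)∫₀^{D} V(ρ) K(λ,ρ) dρ + V_M·((n−1)λ − cos D)/(λ − cos D)^(n−1) ≥ c^(n/2)·[(n−2)∫₀^π W(ρ) K(λ,ρ) dρ + W_S·((n−1)λ+1)/(λ+1)^(n−1)], where K(λ,ρ) = (λ−cos ρ)^(−n)(nλ−cos ρ) sin ρ, V, W are bounded nonnegative functions, 0 < D ≤ π, and V_M, W_S, c > 0. Then V_M ≥ c^(n/2)·W_S. -/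
open MeasureTheory Real


private lemma stmt_12_aux (A CV P VM N l : ℝ) (m : ℕ) (h1 : l - 1 ≠ 0) (h2 : (N-1)*l + 1 ≠ 0) :
    (A * (CV * (((l-1)^(m+3))⁻¹ * (N*l+1)) * P) + VM*((N-1)*l+1)/(l-1)^(m+2))
      * ((l+1)^(m+2)/((N-1)*l+1))
    = A*CV*P*(N + (N+1)*(l-1)⁻¹)*(1+2*(l-1)⁻¹)^(m+2)*((N-1)*l+1)⁻¹
      + VM*(1+2*(l-1)⁻¹)^(m+2) := by
  have e1 : 1 + 2*(l-1)⁻¹ = (l+1)/(l-1) := by field_simp; ring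
  have e2 : N + (N+1)*(l-1)⁻¹ = (N*l+1)/(l-1) := by field_simp; ring
  rw [e1, e2, div_pow, pow_succ (l-1) (m+2)]
  generalize hq : (N-1)*l+1 = q at *
  field_simp

/-- If for all λ > 1,
(n−2)∫₀^D V(ρ)K(λ,ρ)dρ + V_M·((n−1)λ − cos D)/(λ − cos D)^(n−1)
 ≥ c^(n/2)·[(n−2)∫₀^π W(ρ)K(λ,ρ)dρ + W_S·((n−1)λ+1)/(λ+1)^(n−1)],
with K(λ,ρ) = (λ−cos ρ)^(−n)(nλ−cos ρ)sin ρ, V, W bounded nonnegative, 0 < D ≤ π,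
and V_M, W_S, c > 0, then V_M ≥ c^(n/2)·W_S. -/
theorem stmt_12 (n : ℕ) (hn : 3 ≤ n) (D : ℝ) (hD0 : 0 < D) (hDπ : D ≤ Real.pi)
    (V W : ℝ → ℝ) (CV CW : ℝ)
    (hVnn : ∀ ρ : ℝ, 0 ≤ V ρ) (hWnn : ∀ ρ : ℝ, 0 ≤ W ρ)
    (hVb : ∀ ρ : ℝ, V ρ ≤ CV) (hWb : ∀ ρ : ℝ, W ρ ≤ CW)
    (VM WS c : ℝ) (hVM : 0 < VM) (hWS : 0 < WS) (hc : 0 < c)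
    (h : ∀ lam : ℝ, 1 < lam →
      c ^ ((n : ℝ) / 2) *
        (((n : ℝ) - 2) * (∫ ρ in (0:ℝ)..Real.pi, W ρ *
            (((lam - Real.cos ρ) ^ n)⁻¹ * ((n : ℝ) * lam - Real.cos ρ) * Real.sin ρ)) +
          WS * (((n : ℝ) - 1) * lam + 1) / (lam + 1) ^ (n - 1)) ≤
      ((n : ℝ) - 2) * (∫ ρ in (0:ℝ)..D, V ρ *
          (((lam - Real.cos ρ) ^ n)⁻¹ * ((n : ℝ) * lam - Real.cos ρ) * Real.sin ρ)) +
        VM * (((n : ℝ) - 1) * lam - Real.cos D) / (lam - Real.cos D) ^ (n - 1)) :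
    c ^ ((n : ℝ) / 2) * WS ≤ VM := by
  obtain ⟨m, hm⟩ : ∃ m, n = m + 3 := ⟨n - 3, by omega⟩
  have hnR : (3:ℝ) ≤ (n:ℝ) := by exact_mod_cast hn
  have hπ := Real.pi_pos
  have hCV : 0 ≤ CV := le_trans (hVnn 0) (hVb 0)
  have hcr : 0 ≤ c ^ ((n:ℝ)/2) := Real.rpow_nonneg hc.le _
  set X := c ^ ((n:ℝ)/2) * WS with hX
  set F : ℝ → ℝ := fun l =>
    ((n:ℝ) - 2) * CV * Real.pi * ((n:ℝ) + ((n:ℝ)+1) * (l-1)⁻¹)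
      * (1 + 2*(l-1)⁻¹)^(n-1) * ((((n:ℝ)-1)*l + 1)⁻¹)
    + VM * (1 + 2*(l-1)⁻¹)^(n-1) with hF
  have hlim : Filter.Tendsto F Filter.atTop (nhds VM) := by
    have t1 : Filter.Tendsto (fun l:ℝ => (l-1)⁻¹) Filter.atTop (nhds 0) := by
      have h1 : Filter.Tendsto (fun l:ℝ => l - 1) Filter.atTop Filter.atTop := by
        simpa [sub_eq_add_neg] using Filter.tendsto_atTop_add_const_right Filter.atTop (-1:ℝ) Filter.tendsto_id
      exact h1.inv_tendsto_atTop
    have t2 : Filter.Tendsto (fun l:ℝ => (((n:ℝ)-1)*l + 1)⁻¹) Filter.atTop (nhds 0) := by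
      have h1 : Filter.Tendsto (fun l:ℝ => ((n:ℝ)-1)*l) Filter.atTop Filter.atTop :=
        Filter.Tendsto.const_mul_atTop (by linarith) Filter.tendsto_id
      exact (Filter.tendsto_atTop_add_const_right Filter.atTop (1:ℝ) h1).inv_tendsto_atTop
    have tp : Filter.Tendsto (fun l:ℝ => (1 + 2*(l-1)⁻¹)^(n-1)) Filter.atTop
        (nhds ((1 + 2*(0:ℝ))^(n-1))) :=
      (tendsto_const_nhds.add (tendsto_const_nhds.mul t1)).pow _
    have tg : Filter.Tendsto (fun l:ℝ => (n:ℝ) + ((n:ℝ)+1) * (l-1)⁻¹) Filter.atTop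
        (nhds ((n:ℝ) + ((n:ℝ)+1) * 0)) :=
      tendsto_const_nhds.add (tendsto_const_nhds.mul t1)
    have tc : Filter.Tendsto (fun _:ℝ => ((n:ℝ) - 2) * CV * Real.pi) Filter.atTop
        (nhds (((n:ℝ) - 2) * CV * Real.pi)) := tendsto_const_nhds
    have tVM : Filter.Tendsto (fun _:ℝ => VM) Filter.atTop (nhds VM) := tendsto_const_nhds
    have big := (((tc.mul tg).mul tp).mul t2).add (tVM.mul tp)
    have hval : ((n:ℝ) - 2) * CV * Real.pi * ((n:ℝ) + ((n:ℝ)+1) * 0)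
        * (1 + 2*(0:ℝ))^(n-1) * 0 + VM * (1 + 2*(0:ℝ))^(n-1) = VM := by
      norm_num
    rw [hF]
    rw [hval] at big
    exact big
  have key : ∀ᶠ l in Filter.atTop, X ≤ F l := by
    filter_upwards [Filter.eventually_ge_atTop (2:ℝ)] with l hl
    have hl1 : (1:ℝ) < l := by linarith
    have hl1' : (0:ℝ) < l - 1 := by linarith
    have hq : (0:ℝ) < ((n:ℝ)-1)*l + 1 := by nlinarith
    have hnl : (6:ℝ) ≤ (n:ℝ) * l := by nlinarith
    -- bound on the V-integral
    set C : ℝ := CV * (((l-1)^n)⁻¹ * ((n:ℝ)*l + 1)) with hCdef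
    have hC0 : 0 ≤ C := by
      apply mul_nonneg hCV
      have : (0:ℝ) < ((l-1)^n)⁻¹ := by positivity
      nlinarith
    have hIV : (∫ ρ in (0:ℝ)..D, V ρ *
        (((l - Real.cos ρ) ^ n)⁻¹ * ((n : ℝ) * l - Real.cos ρ) * Real.sin ρ)) ≤ C * Real.pi := by
      have hb : ∀ x ∈ Set.uIoc (0:ℝ) D, ‖V x *
          (((l - Real.cos x) ^ n)⁻¹ * ((n : ℝ) * l - Real.cos x) * Real.sin x)‖ ≤ C := by
        intro x hx
        rw [Set.uIoc_of_le hD0.le] at hx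
        have hx1 : 0 < x := hx.1
        have hx2 : x ≤ Real.pi := hx.2.trans hDπ
        have hsin : 0 ≤ Real.sin x := Real.sin_nonneg_of_nonneg_of_le_pi hx1.le hx2
        have hsin1 : Real.sin x ≤ 1 := Real.sin_le_one x
        have hcos1 : Real.cos x ≤ 1 := Real.cos_le_one x
        have hcos2 : -1 ≤ Real.cos x := Real.neg_one_le_cos x
        have hlc : 0 < l - Real.cos x := by linarith
        have hnum : 0 ≤ (n:ℝ) * l - Real.cos x := by linarith
        have hK0 : 0 ≤ ((l - Real.cos x) ^ n)⁻¹ * ((n : ℝ) * l - Real.cos x) * Real.sin x := by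
          apply mul_nonneg (mul_nonneg (by positivity) hnum) hsin
        have h1 : ((l - Real.cos x) ^ n)⁻¹ ≤ ((l-1)^n)⁻¹ := by
          apply inv_anti₀ (by positivity)
          exact pow_le_pow_left₀ hl1'.le (by linarith) n
        have h2 : (n:ℝ) * l - Real.cos x ≤ (n:ℝ)*l + 1 := by linarith
        have hK : ((l - Real.cos x) ^ n)⁻¹ * ((n : ℝ) * l - Real.cos x) * Real.sin x
            ≤ ((l-1)^n)⁻¹ * ((n:ℝ)*l + 1) := by
          calc ((l - Real.cos x) ^ n)⁻¹ * ((n : ℝ) * l - Real.cos x) * Real.sin x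
              ≤ ((l-1)^n)⁻¹ * ((n:ℝ)*l + 1) * 1 := by
                apply mul_le_mul _ hsin1 hsin (by positivity)
                exact mul_le_mul h1 h2 hnum (by positivity)
            _ = ((l-1)^n)⁻¹ * ((n:ℝ)*l + 1) := mul_one _
        rw [Real.norm_eq_abs, abs_of_nonneg (mul_nonneg (hVnn x) hK0)]
        exact mul_le_mul (hVb x) hK hK0 hCV
      have := intervalIntegral.norm_integral_le_of_norm_le_const hb
      have habs : |D - 0| = D := by rw [sub_zero, abs_of_pos hD0]
      rw [habs] at this
      calc (∫ ρ in (0:ℝ)..D, V ρ *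
          (((l - Real.cos ρ) ^ n)⁻¹ * ((n : ℝ) * l - Real.cos ρ) * Real.sin ρ))
          ≤ ‖∫ ρ in (0:ℝ)..D, V ρ *
            (((l - Real.cos ρ) ^ n)⁻¹ * ((n : ℝ) * l - Real.cos ρ) * Real.sin ρ)‖ :=
            le_abs_self _
        _ ≤ C * D := this
        _ ≤ C * Real.pi := mul_le_mul_of_nonneg_left hDπ hC0
    -- nonnegativity of the W-integral
    have hIW : 0 ≤ ∫ ρ in (0:ℝ)..Real.pi, W ρ *
        (((l - Real.cos ρ) ^ n)⁻¹ * ((n : ℝ) * l - Real.cos ρ) * Real.sin ρ) := by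
      apply intervalIntegral.integral_nonneg hπ.le
      intro x hx
      have hsin : 0 ≤ Real.sin x := Real.sin_nonneg_of_nonneg_of_le_pi hx.1 hx.2
      have hcos1 : Real.cos x ≤ 1 := Real.cos_le_one x
      have hnum : 0 ≤ (n:ℝ) * l - Real.cos x := by linarith
      have hlc : 0 < l - Real.cos x := by linarith
      exact mul_nonneg (hWnn x) (mul_nonneg (mul_nonneg (by positivity) hnum) hsin)
    -- chain of inequalities
    have hmain := h l hl1
    have hWterm : X * (((((n:ℝ)-1)*l + 1)) / (l+1)^(n-1)) ≤
        c ^ ((n : ℝ) / 2) * (((n : ℝ) - 2) * (∫ ρ in (0:ℝ)..Real.pi, W ρ *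
            (((l - Real.cos ρ) ^ n)⁻¹ * ((n : ℝ) * l - Real.cos ρ) * Real.sin ρ)) +
          WS * (((n : ℝ) - 1) * l + 1) / (l + 1) ^ (n - 1)) := by
      have h0 : 0 ≤ ((n:ℝ)-2) * ∫ ρ in (0:ℝ)..Real.pi, W ρ *
          (((l - Real.cos ρ) ^ n)⁻¹ * ((n : ℝ) * l - Real.cos ρ) * Real.sin ρ) :=
        mul_nonneg (by linarith) hIW
      have heq : X * (((((n:ℝ)-1)*l + 1)) / (l+1)^(n-1)) =
          c ^ ((n : ℝ) / 2) * (WS * (((n : ℝ) - 1) * l + 1) / (l + 1) ^ (n - 1)) := by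
        rw [hX]; ring
      rw [heq]
      apply mul_le_mul_of_nonneg_left _ hcr
      linarith
    have hVterm : VM * (((n : ℝ) - 1) * l - Real.cos D) / (l - Real.cos D) ^ (n - 1) ≤
        VM * (((n:ℝ)-1)*l + 1) / (l-1) ^ (n-1) := by
      apply div_le_div₀ (mul_nonneg hVM.le hq.le)
        (mul_le_mul_of_nonneg_left (by linarith [Real.neg_one_le_cos D]) hVM.le)
        (pow_pos hl1' _)
        (pow_le_pow_left₀ hl1'.le (by linarith [Real.cos_le_one D]) _)
    have hB : X * (((((n:ℝ)-1)*l + 1)) / (l+1)^(n-1)) ≤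
        ((n:ℝ)-2) * (C * Real.pi) + VM * (((n:ℝ)-1)*l + 1) / (l-1) ^ (n-1) := by
      have h3 : ((n : ℝ) - 2) * (∫ ρ in (0:ℝ)..D, V ρ *
          (((l - Real.cos ρ) ^ n)⁻¹ * ((n : ℝ) * l - Real.cos ρ) * Real.sin ρ))
          ≤ ((n:ℝ)-2) * (C * Real.pi) := mul_le_mul_of_nonneg_left hIV (by linarith)
      linarith
    -- multiply through by (l+1)^(n-1)/((n-1)l+1)
    have hp : (0:ℝ) < (l+1)^(n-1) := by positivity
    have hfrac : (0:ℝ) ≤ (l+1)^(n-1) / (((n:ℝ)-1)*l + 1) := by positivity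
    have h5 := mul_le_mul_of_nonneg_right hB hfrac
    have h6 : X * (((((n:ℝ)-1)*l + 1)) / (l+1)^(n-1)) * ((l+1)^(n-1) / (((n:ℝ)-1)*l + 1))
        = X := by field_simp
    rw [h6] at h5
    refine h5.trans_eq ?_
    rw [hF, hCdef]
    have e1 : n - 1 = m + 2 := by omega
    have hne1 : l - 1 ≠ 0 := ne_of_gt hl1'
    have hne2 : ((n:ℝ)-1)*l + 1 ≠ 0 := ne_of_gt hq
    have hne3 : l + 1 ≠ 0 := by positivity
    simp only [e1, hm]
    exact stmt_12_aux _ _ _ _ _ _ m hne1 (by rw [← hm]; exact hne2)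
  exact ge_of_tendsto hlim key
end

section
/- For n ≥ 3, λ > 1, and any finite measure μ on a space with distance function d to a basepoint with values in [0,π], setting f(λ) = ∫ (λ − cos d)^(2−n) dμ, one has ((1−λ²)/(2(n−1)))f''(λ) − λ f'(λ) + ((2−n)/2) f(λ) = ((n−2)/2)·∫ (λ − cos d)^(−n) sin² d dμ; in particular the left-hand side is nonnegative. -/
open MeasureTheory Real Metric

section Aux

variable {X : Type*} [MeasurableSpace X]

lemma aux_meas (μ : Measure X) (d : X → ℝ) (hd : Measurable d) (k : ℕ) (t : ℝ) :
    AEStronglyMeasurable (fun x => ((t - Real.cos (d x)) ^ k)⁻¹) μ :=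
  (((measurable_const.sub (Real.measurable_cos.comp hd)).pow_const k).inv).aestronglyMeasurable

lemma aux_int (μ : Measure X) [IsFiniteMeasure μ] (d : X → ℝ) (hd : Measurable d) (k : ℕ) {lam : ℝ} (hl : 1 < lam) :
    Integrable (fun x => ((lam - Real.cos (d x)) ^ k)⁻¹) μ := by
  refine (integrable_const (((lam - 1) ^ k)⁻¹)).mono' (aux_meas μ d hd k lam) ?_
  filter_upwards with x
  have hc : Real.cos (d x) ≤ 1 := Real.cos_le_one _
  have h1 : (0:ℝ) < lam - 1 := by linarith
  have h2 : lam - 1 ≤ lam - Real.cos (d x) := by linarith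
  rw [norm_inv, norm_pow, Real.norm_eq_abs, abs_of_pos (by linarith)]
  gcongr

lemma aux_ptderiv (j : ℕ) (c : ℝ) (hc : c ≤ 1) {t : ℝ} (ht : 1 < t) :
    HasDerivAt (fun s => ((s - c) ^ (j + 1))⁻¹)
      (-((j:ℝ) + 1) * ((t - c) ^ (j + 2))⁻¹) t := by
  have h0 : (0:ℝ) < t - c := by linarith
  have h1 : HasDerivAt (fun s : ℝ => (s - c) ^ (j + 1))
      (((j:ℝ) + 1) * (t - c) ^ j * 1) t := by
    have := ((hasDerivAt_id t).sub_const c).fun_pow (j + 1)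
    simpa using this
  have h2 : HasDerivAt (fun s => ((s - c) ^ (j + 1))⁻¹) _ t := h1.fun_inv (by positivity)
  convert h2 using 1
  field_simp
  ring

lemma aux_hasDeriv (μ : Measure X) [IsFiniteMeasure μ] (d : X → ℝ) (hd : Measurable d) (j : ℕ) {lam : ℝ} (hl : 1 < lam) :
    HasDerivAt (fun t => ∫ x, ((t - Real.cos (d x)) ^ (j + 1))⁻¹ ∂μ)
      (-((j:ℝ) + 1) * ∫ x, ((lam - Real.cos (d x)) ^ (j + 2))⁻¹ ∂μ) lam := by
  have hε : (0:ℝ) < (lam - 1) / 2 := by linarith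
  have key := hasDerivAt_integral_of_dominated_loc_of_deriv_le (μ := μ)
    (F := fun t x => ((t - Real.cos (d x)) ^ (j + 1))⁻¹)
    (F' := fun t x => -((j:ℝ) + 1) * ((t - Real.cos (d x)) ^ (j + 2))⁻¹)
    (bound := fun _ => ((j:ℝ) + 1) * (((lam - 1) / 2) ^ (j + 2))⁻¹)
    (x₀ := lam) (Metric.ball_mem_nhds lam hε)
    (Filter.Eventually.of_forall fun t => aux_meas μ d hd (j + 1) t)
    (aux_int μ d hd (j + 1) hl)
    ((aestronglyMeasurable_const.mul (aux_meas μ d hd (j + 2) lam)))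
    ?_ (integrable_const _) ?_
  · have := key.2
    rwa [MeasureTheory.integral_const_mul] at this
  · filter_upwards with x t ht
    have hc : Real.cos (d x) ≤ 1 := Real.cos_le_one _
    have htl : (lam + 1) / 2 < t := by
      rw [Metric.mem_ball, Real.dist_eq, abs_lt] at ht
      linarith [ht.1]
    have h2 : (lam - 1) / 2 ≤ t - Real.cos (d x) := by linarith
    rw [norm_mul, norm_inv, norm_pow, Real.norm_eq_abs, Real.norm_eq_abs,
      abs_of_pos (by linarith : (0:ℝ) < t - Real.cos (d x))]
    have habs : |(-((j:ℝ) + 1))| = (j:ℝ) + 1 := by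
      rw [abs_neg, abs_of_pos]; positivity
    rw [habs]
    have : ((t - Real.cos (d x)) ^ (j + 2))⁻¹ ≤ (((lam - 1) / 2) ^ (j + 2))⁻¹ := by
      gcongr
    nlinarith [this, (by positivity : (0:ℝ) < (j:ℝ) + 1)]
  · filter_upwards with x t ht
    have htl : 1 < t := by
      rw [Metric.mem_ball, Real.dist_eq, abs_lt] at ht
      linarith [ht.1]
    exact aux_ptderiv j _ (Real.cos_le_one _) htl

end Aux

/-- For f(λ) = ∫ (λ − cos d)^(2−n) dμ with d taking values in [0,π] and μ finite,
((1−λ²)/(2(n−1)))f''(λ) − λf'(λ) + ((2−n)/2)f(λ)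
  = ((n−2)/2)·∫ (λ − cos d)^(−n) sin²d dμ ≥ 0 for every λ > 1. -/
theorem stmt_16 (n : ℕ) (hn : 3 ≤ n)
    {X : Type*} [MeasurableSpace X] (μ : Measure X) [IsFiniteMeasure μ]
    (d : X → ℝ) (hd : Measurable d) (hd0 : ∀ x, d x ∈ Set.Icc (0 : ℝ) Real.pi)
    (f : ℝ → ℝ) (hf : f = fun lam => ∫ x, ((lam - Real.cos (d x)) ^ (n - 2))⁻¹ ∂μ) :
    ∀ lam : ℝ, 1 < lam →
      ((1 - lam ^ 2) / (2 * ((n : ℝ) - 1))) * deriv (deriv f) lam - lam * deriv f lam +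
          ((2 - (n : ℝ)) / 2) * f lam =
        ((n : ℝ) - 2) / 2 * ∫ x, ((lam - Real.cos (d x)) ^ n)⁻¹ * Real.sin (d x) ^ 2 ∂μ ∧
      0 ≤ ((1 - lam ^ 2) / (2 * ((n : ℝ) - 1))) * deriv (deriv f) lam - lam * deriv f lam +
          ((2 - (n : ℝ)) / 2) * f lam := by
  obtain ⟨m, rfl⟩ : ∃ m, n = m + 3 := ⟨n - 3, by omega⟩
  intro lam hl
  set h : ℕ → ℝ → ℝ := fun k t => ∫ x, ((t - Real.cos (d x)) ^ k)⁻¹ ∂μ with hh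
  have hfh : f = h (m + 1) := by rw [hf]; rfl
  -- deriv f on (1, ∞)
  have hderiv1 : ∀ t : ℝ, 1 < t → deriv f t = -((m:ℝ) + 1) * h (m + 2) t := by
    intro t ht
    rw [hfh]
    exact (aux_hasDeriv μ d hd m ht).deriv
  have hEq : deriv f =ᶠ[nhds lam] fun t => -((m:ℝ) + 1) * h (m + 2) t := by
    filter_upwards [eventually_gt_nhds hl] with t ht
    exact hderiv1 t ht
  have hderiv2 : deriv (deriv f) lam = ((m:ℝ) + 1) * (((m:ℝ) + 2) * h (m + 3) lam) := by
    rw [hEq.deriv_eq]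
    have h2 : HasDerivAt (h (m + 2)) (-((m:ℝ) + 1 + 1) * h (m + 3) lam) lam := by
      have := aux_hasDeriv μ d hd (m + 1) hl
      simpa [hh] using this
    have := (h2.const_mul (-((m:ℝ) + 1))).deriv
    rw [this]; ring
  have hd1 : deriv f lam = -((m:ℝ) + 1) * h (m + 2) lam := hderiv1 lam hl
  have hflam : f lam = h (m + 1) lam := by rw [hfh]
  -- integrability
  have i1 := aux_int μ d hd (m + 1) hl
  have i2 := aux_int μ d hd (m + 2) hl
  have i3 := aux_int μ d hd (m + 3) hl
  have hcast : ((m + 3 : ℕ) : ℝ) = (m : ℝ) + 3 := by push_cast; ring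
  rw [hcast]
  set A : ℝ := (1 - lam ^ 2) / (2 * ((m:ℝ) + 3 - 1)) * ((m + 1) * ((m:ℝ) + 2)) with hA
  set B : ℝ := lam * ((m:ℝ) + 1) with hB
  set C : ℝ := (2 - ((m:ℝ) + 3)) / 2 with hC
  have comb : ∫ x, (A * ((lam - Real.cos (d x)) ^ (m + 3))⁻¹
        + B * ((lam - Real.cos (d x)) ^ (m + 2))⁻¹
        + C * ((lam - Real.cos (d x)) ^ (m + 1))⁻¹) ∂μ
      = A * h (m + 3) lam + B * h (m + 2) lam + C * h (m + 1) lam := by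
    have hAB : Integrable (fun x => A * ((lam - Real.cos (d x)) ^ (m + 3))⁻¹
        + B * ((lam - Real.cos (d x)) ^ (m + 2))⁻¹) μ := (i3.const_mul A).add (i2.const_mul B)
    rw [MeasureTheory.integral_add hAB (i1.const_mul C),
      MeasureTheory.integral_add (i3.const_mul A) (i2.const_mul B),
      MeasureTheory.integral_const_mul, MeasureTheory.integral_const_mul,
      MeasureTheory.integral_const_mul]
  have pt : ∀ x, A * ((lam - Real.cos (d x)) ^ (m + 3))⁻¹
        + B * ((lam - Real.cos (d x)) ^ (m + 2))⁻¹
        + C * ((lam - Real.cos (d x)) ^ (m + 1))⁻¹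
      = (((m:ℝ) + 3) - 2) / 2 * (((lam - Real.cos (d x)) ^ (m + 3))⁻¹ * Real.sin (d x) ^ 2) := by
    intro x
    have hc1 : Real.cos (d x) ≤ 1 := Real.cos_le_one _
    have ht : (0:ℝ) < lam - Real.cos (d x) := by linarith
    have hs : Real.sin (d x) ^ 2 = 1 - Real.cos (d x) ^ 2 := by rw [Real.sin_sq]
    set c := Real.cos (d x)
    set t := lam - c with htdef
    have hm0 : (0:ℝ) ≤ m := Nat.cast_nonneg m
    have hm1 : (m:ℝ) + 3 - 1 ≠ 0 := by intro hcon; linarith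
    have hlc : lam = t + c := by rw [htdef]; ring
    rw [hs, hA, hB, hC]
    have ht3 : t ^ (m + 3) = t ^ (m + 1) * t ^ 2 := by ring
    have ht2 : t ^ (m + 2) = t ^ (m + 1) * t := by ring
    field_simp
    rw [hlc]
    ring
  have key : ((1 - lam ^ 2) / (2 * (((m:ℝ) + 3) - 1))) * deriv (deriv f) lam
        - lam * deriv f lam + ((2 - ((m:ℝ) + 3)) / 2) * f lam =
      (((m:ℝ) + 3) - 2) / 2 *
        ∫ x, ((lam - Real.cos (d x)) ^ (m + 3))⁻¹ * Real.sin (d x) ^ 2 ∂μ := by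
    rw [hderiv2, hd1, hflam]
    rw [show (((m:ℝ) + 3) - 2) / 2 *
          ∫ x, ((lam - Real.cos (d x)) ^ (m + 3))⁻¹ * Real.sin (d x) ^ 2 ∂μ
        = ∫ x, (((m:ℝ) + 3) - 2) / 2 *
            (((lam - Real.cos (d x)) ^ (m + 3))⁻¹ * Real.sin (d x) ^ 2) ∂μ
      from (MeasureTheory.integral_const_mul _ _).symm]
    rw [← integral_congr_ae (Filter.Eventually.of_forall pt), comb]
    ring
  refine ⟨key, ?_⟩
  rw [key]
  have hm0 : (0:ℝ) ≤ m := Nat.cast_nonneg m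
  apply mul_nonneg (by linarith)
  apply integral_nonneg
  intro x
  have hc1 : Real.cos (d x) ≤ 1 := Real.cos_le_one _
  have ht : (0:ℝ) < lam - Real.cos (d x) := by linarith
  positivity
end
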